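/- Let n, k ≥ 1 and let Gⁱ : ℝⁿ × (ℝⁿ)ᵏ → ℝ be smooth and (k+1)-homogeneous, i.e. Gⁱ(x, λ y⁽¹⁾, …, λᵏ y⁽ᵏ⁾) = λᵏ⁺¹ Gⁱ for all λ > 0. Define ²Gⁱ = (1/(k+1)) Σ_{α=1}^{k} Σ_{h} α y⁽ᵅ⁾ʰ ∂Gⁱ/∂y⁽ᵅ⁾ʰ. Then the Bucǎtaru dual coefficients constructed from ¹G and from ²G coincide, i.e. ∂(²Gⁱ)/∂y⁽ᵅ⁾ʲ = ∂Gⁱ/∂y⁽ᵅ⁾ʲ for all α ∈ {1, …, k} and all i, j; in particular the sequence of Bucǎtaru nonlinear connections (ᵐN*)_{m ≥ 1} determined by the sequence of k-semisprays ᵐ⁺¹Gⁱ = (1/(k+1)) Γᵏ(ᵐGⁱ) is constant. -/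

import Mathlib

/- STATEMENT 14: Let the k-semispray coefficients Gⁱ be smooth and
(k+1)-homogeneous, and set ²Gⁱ = (1/(k+1)) Γᵏ Gⁱ.  Then the Bucǎtaru dual
coefficients built from ²G and from G coincide: ∂(²Gⁱ)/∂y⁽ᵅ⁾ʲ = ∂Gⁱ/∂y⁽ᵅ⁾ʲ for
all α, i, j; in particular, along the sequence ᵐ⁺¹Gⁱ = (1/(k+1)) Γᵏ(ᵐGⁱ) the
Bucǎtaru nonlinear connections (ᵐN*) are all equal (their dual coefficients
∂(ᵐGⁱ)/∂y⁽ᵅ⁾ʲ all equal ∂Gⁱ/∂y⁽ᵅ⁾ʲ).  Vertical slots are 0-indexed: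
slot `a : Fin k` is y⁽ᵃ⁺¹⁾; `seqG n k G m` stands for ᵐ⁺¹G. -/

noncomputable section

abbrev Pt (n k : ℕ) : Type := (Fin n → ℝ) × (Fin k → Fin n → ℝ)

def scale (n k : ℕ) (lam : ℝ) (p : Pt n k) : Pt n k :=
  (p.1, fun a => lam ^ ((a : ℕ) + 1) • p.2 a)

/-- The partial derivative ∂f/∂y⁽ᵃ⁺¹⁾ʰ at p. -/
def pderivY (n k : ℕ) (f : Pt n k → ℝ) (a : Fin k) (h : Fin n) (p : Pt n k) : ℝ :=
  fderiv ℝ f p (0, Pi.single a (Pi.single h 1))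

/-- The Liouville operator Γᵏ f = Σ_{α=1}^k Σ_h α y⁽ᵅ⁾ʰ ∂f/∂y⁽ᵅ⁾ʰ. -/
def liouvOp (n k : ℕ) (f : Pt n k → ℝ) (p : Pt n k) : ℝ :=
  ∑ a : Fin k, ∑ h : Fin n,
    (((a : ℕ) + 1 : ℕ) : ℝ) * p.2 a h * pderivY n k f a h p

/-- The sequence of k-semispray coefficients: `seqG n k G 0 = ¹G = G` and
`seqG n k G (m+1) = (1/(k+1)) Γᵏ (seqG n k G m)` (so `seqG n k G m` is ᵐ⁺¹G). -/
def seqG (n k : ℕ) (G : Fin n → Pt n k → ℝ) : ℕ → Fin n → Pt n k → ℝ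
  | 0 => G
  | (m + 1) => fun i p => ((k : ℝ) + 1)⁻¹ * liouvOp n k (seqG n k G m i) p

lemma vec_decomp (n k : ℕ) (v : Fin k → Fin n → ℝ) :
    ((0, v) : Pt n k) =
      ∑ a : Fin k, ∑ h : Fin n, v a h • ((0, Pi.single a (Pi.single h 1)) : Pt n k) := by
  apply Prod.ext
  · simp [Prod.fst_sum]
  · simp only [Prod.snd_sum, Prod.smul_snd]
    funext b c
    simp [Finset.sum_apply, ite_apply, Pi.single_apply, Finset.sum_ite_eq]

lemma scale_one (n k : ℕ) (p : Pt n k) : scale n k 1 p = p := by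
  simp [scale]

lemma euler (n k : ℕ) (G : Pt n k → ℝ) (hG : ContDiff ℝ (⊤ : ℕ∞) G)
    (hom : ∀ lam : ℝ, 0 < lam → ∀ p : Pt n k,
      G (scale n k lam p) = lam ^ (k + 1) * G p) (p : Pt n k) :
    liouvOp n k G p = ((k : ℝ) + 1) * G p := by
  have hdiff : HasFDerivAt G (fderiv ℝ G p) p :=
    ((hG.differentiable (by simp)) p).hasFDerivAt
  -- derivative of the curve λ ↦ scale λ p at λ = 1
  have hc : HasDerivAt (fun lam : ℝ => scale n k lam p)
      ((0, fun a : Fin k => (((a : ℕ) + 1 : ℕ) : ℝ) • p.2 a) : Pt n k) 1 := by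
    apply HasDerivAt.prodMk
    · simpa using (hasDerivAt_const (1 : ℝ) p.1)
    · rw [hasDerivAt_pi]
      intro a
      have := (hasDerivAt_pow ((a : ℕ) + 1) (1 : ℝ)).smul_const (p.2 a)
      simpa using this
  have hcomp : HasDerivAt (fun lam : ℝ => G (scale n k lam p))
      (fderiv ℝ G p ((0, fun a : Fin k => (((a : ℕ) + 1 : ℕ) : ℝ) • p.2 a) : Pt n k)) 1 := by
    have hdiff' : HasFDerivAt G (fderiv ℝ G p) (scale n k 1 p) := by
      rw [scale_one]; exact hdiff
    exact hdiff'.comp_hasDerivAt 1 hc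
  -- the other expression for the same function near 1
  have heq : (fun lam : ℝ => G (scale n k lam p)) =ᶠ[nhds (1 : ℝ)]
      (fun lam : ℝ => lam ^ (k + 1) * G p) := by
    filter_upwards [IsOpen.mem_nhds isOpen_Ioi (by norm_num : (1 : ℝ) ∈ Set.Ioi (0 : ℝ))]
      with lam hlam
    exact hom lam hlam p
  have h2 : HasDerivAt (fun lam : ℝ => G (scale n k lam p))
      ((((k : ℕ) + 1 : ℕ) : ℝ) * G p) 1 := by
    have := (hasDerivAt_pow (k + 1) (1 : ℝ)).mul_const (G p)
    have h' : HasDerivAt (fun lam : ℝ => lam ^ (k + 1) * G p)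
        ((((k : ℕ) + 1 : ℕ) : ℝ) * G p) 1 := by simpa using this
    exact h'.congr_of_eventuallyEq heq
  have huniq : fderiv ℝ G p ((0, fun a : Fin k => (((a : ℕ) + 1 : ℕ) : ℝ) • p.2 a) : Pt n k)
      = (((k : ℕ) + 1 : ℕ) : ℝ) * G p := hcomp.unique h2
  -- expand the linear map over the basis decomposition
  have hdec : ((0, fun a : Fin k => (((a : ℕ) + 1 : ℕ) : ℝ) • p.2 a) : Pt n k)
      = ∑ a : Fin k, ∑ h : Fin n,
          ((((a : ℕ) + 1 : ℕ) : ℝ) * p.2 a h) • ((0, Pi.single a (Pi.single h 1)) : Pt n k) := by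
    exact vec_decomp n k (fun a h => (((a : ℕ) + 1 : ℕ) : ℝ) * p.2 a h)
  have hlin : liouvOp n k G p
      = fderiv ℝ G p ((0, fun a : Fin k => (((a : ℕ) + 1 : ℕ) : ℝ) • p.2 a) : Pt n k) := by
    rw [hdec, map_sum]
    unfold liouvOp pderivY
    congr 1
    funext a
    rw [map_sum]
    congr 1
    funext h
    rw [map_smul]
    simp [mul_assoc]
  rw [hlin, huniq]
  push_cast
  ring

theorem stmt_14 (n k : ℕ) (hn : 1 ≤ n) (hk : 1 ≤ k)
    (G : Fin n → Pt n k → ℝ) (hG : ∀ i, ContDiff ℝ (⊤ : ℕ∞) (G i))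
    (hom : ∀ i : Fin n, ∀ lam : ℝ, 0 < lam → ∀ p : Pt n k,
      G i (scale n k lam p) = lam ^ (k + 1) * G i p) :
    (∀ (a : Fin k) (i j : Fin n) (p : Pt n k),
      pderivY n k (fun q => ((k : ℝ) + 1)⁻¹ * liouvOp n k (G i) q) a j p
        = pderivY n k (G i) a j p) ∧
    (∀ (m : ℕ) (a : Fin k) (i j : Fin n) (p : Pt n k),
      pderivY n k (seqG n k G m i) a j p = pderivY n k (G i) a j p) := by
  have hk1 : ((k : ℝ) + 1) ≠ 0 := by positivity
  have key : ∀ i, (fun q => ((k : ℝ) + 1)⁻¹ * liouvOp n k (G i) q) = G i := by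
    intro i
    funext q
    rw [euler n k (G i) (hG i) (hom i) q]
    field_simp
  have hseq : ∀ m i, seqG n k G m i = G i := by
    intro m
    induction m with
    | zero => intro i; rfl
    | succ m ih =>
      intro i
      show (fun p => ((k : ℝ) + 1)⁻¹ * liouvOp n k (seqG n k G m i) p) = G i
      rw [ih i]
      exact key i
  constructor
  · intro a i j p
    rw [key i]
  · intro m a i j p
    rw [hseq m i]
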